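/- Let V ⊂ {(r,z) : r ≥ 0} ⊂ ℝ² be a bounded open set whose closure contains the origin, and let ρ(r,z) = √(r²+z²). If v satisfies ‖v‖²_{K^m_{a,1}(V)} := Σ_{|α| ≤ m} ∫_V ρ^{2(|α|-a)} (∂^α v)² r dr dz < ∞ for some integer m ≥ 0 and real a, then for each 0 ≤ l ≤ m, ‖ρ^{-a+l} v‖²_{H^l_1(V)} ≤ C ‖v‖²_{K^m_{a,1}(V)}, where ‖w‖²_{H^l_1(V)} = Σ_{|α| ≤ l} ∫_V (∂^α w)² r dr dz and C depends only on m, a, and the diameter of V. -/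

import Mathlib

open MeasureTheory

noncomputable section

abbrev P2 := ℝ × ℝ

/-- ρ(r,z) = √(r² + z²). -/
def rho2 (p : P2) : ℝ := Real.sqrt (p.1 ^ 2 + p.2 ^ 2)

def pdr (f : P2 → ℝ) : P2 → ℝ := fun p => fderiv ℝ f p (1, 0)
def pdz (f : P2 → ℝ) : P2 → ℝ := fun p => fderiv ℝ f p (0, 1)

/-- ∂^α = ∂_r^{α₁} ∂_z^{α₂}. -/
def D2 (α : ℕ × ℕ) (f : P2 → ℝ) : P2 → ℝ := pdr^[α.1] (pdz^[α.2] f)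

def wt2 (α : ℕ × ℕ) : ℕ := α.1 + α.2

/-- Multi-indices with |α| ≤ m. -/
def idx2 (m : ℕ) : Finset (ℕ × ℕ) :=
  ((Finset.range (m+1)) ×ˢ (Finset.range (m+1))).filter fun α => wt2 α ≤ m

/-- ‖v‖²_{K^m_{a,1}(V)} = Σ_{|α|≤m} ∫_V ρ^{2(|α|-a)} (∂^α v)² r dr dz. -/
def K2 (V : Set P2) (m : ℕ) (a : ℝ) (v : P2 → ℝ) : ℝ :=
  ∑ α ∈ idx2 m, ∫ p in V, rho2 p ^ (2 * ((wt2 α : ℝ) - a)) * (D2 α v p) ^ 2 * p.1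

/-- ‖w‖²_{H^l_1(V)} = Σ_{|α|≤l} ∫_V (∂^α w)² r dr dz. -/
def H21 (V : Set P2) (l : ℕ) (w : P2 → ℝ) : ℝ :=
  ∑ α ∈ idx2 l, ∫ p in V, (D2 α w p) ^ 2 * p.1

/-!
By the product rule, `∂^α (ρ^s v)` is a finite sum of terms `c ρ^t r^i z^j ∂^β v` with
`|β| ≤ |α|`, each homogeneous of degree `s - |α|`: a derivative either lowers the degree of
`ρ^t r^i z^j` by one or moves onto `v`. The list of terms depends only on `s` and `α`.
Since `|r|, |z| ≤ ρ`, for `s = l - a` such a term is bounded by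
`|c| ρ^(l-|α|) ρ^(|β|-a) |∂^β v| ≤ |c| M^(l-|α|) ρ^(|β|-a) |∂^β v|`, where `ρ ≤ M` on the bounded
set `V`. Squaring with Cauchy–Schwarz and integrating against `r dr dz` gives the estimate.
-/

lemma mem_idx2 {β : ℕ × ℕ} {m : ℕ} : β ∈ idx2 m ↔ wt2 β ≤ m := by
  unfold idx2
  rw [Finset.mem_filter, Finset.mem_product, Finset.mem_range, Finset.mem_range]
  unfold wt2
  omega

lemma IsOpen.fst_pos {V : Set P2} (hVo : IsOpen V) (hVr : V ⊆ {p : P2 | 0 ≤ p.1}) {p : P2}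
    (hp : p ∈ V) : 0 < p.1 := by
  have hint : V ⊆ Prod.fst ⁻¹' interior (Set.Ici 0) := by
    rw [isOpenMap_fst.preimage_interior_eq_interior_preimage continuous_fst]
    exact interior_maximal hVr hVo
  simpa [interior_Ici] using hint hp

lemma fst_sq_add_snd_sq_pos {p : P2} (hp : p ≠ 0) : 0 < p.1 ^ 2 + p.2 ^ 2 := by
  have : p.1 ≠ 0 ∨ p.2 ≠ 0 := by
    contrapose! hp
    exact Prod.ext hp.1 hp.2
  rcases this with h | h <;> positivity

lemma rho2_pos {p : P2} (hp : p ≠ 0) : 0 < rho2 p := Real.sqrt_pos.2 (fst_sq_add_snd_sq_pos hp)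

lemma rho2_nonneg (p : P2) : 0 ≤ rho2 p := Real.sqrt_nonneg _

lemma abs_fst_le_rho2 (p : P2) : |p.1| ≤ rho2 p :=
  Real.abs_le_sqrt (le_add_of_nonneg_right (sq_nonneg _))

lemma abs_snd_le_rho2 (p : P2) : |p.2| ≤ rho2 p :=
  Real.abs_le_sqrt (le_add_of_nonneg_left (sq_nonneg _))

lemma rho2_le_two_mul_norm (p : P2) : rho2 p ≤ 2 * ‖p‖ := by
  have h1 : |p.1| ≤ ‖p‖ := norm_fst_le p
  have h2 : |p.2| ≤ ‖p‖ := norm_snd_le p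
  refine Real.sqrt_le_iff.2 ⟨by positivity, ?_⟩
  nlinarith [sq_abs p.1, sq_abs p.2, abs_nonneg p.1, abs_nonneg p.2]

lemma rho2_rpow (p : P2) (t : ℝ) : rho2 p ^ t = (p.1 ^ 2 + p.2 ^ 2) ^ (t / 2) := by
  rw [rho2, Real.sqrt_eq_rpow, ← Real.rpow_mul (by positivity)]
  ring_nf

lemma hasFDerivAt_rho2_rpow {p : P2} (hp : p ≠ 0) (t : ℝ) :
    HasFDerivAt (fun q => rho2 q ^ t)
      ((t * rho2 p ^ (t - 2)) • (p.1 • ContinuousLinearMap.fst ℝ ℝ ℝ +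
        p.2 • ContinuousLinearMap.snd ℝ ℝ ℝ)) p := by
  have hsq : HasFDerivAt (fun q : P2 => q.1 ^ 2 + q.2 ^ 2)
      ((2 * p.1) • ContinuousLinearMap.fst ℝ ℝ ℝ + (2 * p.2) • ContinuousLinearMap.snd ℝ ℝ ℝ) p := by
    have h1 := (hasDerivAt_pow 2 p.1).comp_hasFDerivAt p (hasFDerivAt_fst (p := p) (𝕜 := ℝ))
    have h2 := (hasDerivAt_pow 2 p.2).comp_hasFDerivAt p (hasFDerivAt_snd (p := p) (𝕜 := ℝ))
    norm_num at h1 h2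
    exact h1.add h2
  have := hsq.rpow_const (p := t / 2) (Or.inl (fst_sq_add_snd_sq_pos hp).ne')
  simp only [← rho2_rpow] at this
  refine this.congr_fderiv ?_
  rw [rho2_rpow, show (t - 2) / 2 = t / 2 - 1 by ring]
  ext <;> simp <;> ring

lemma D2_succ_fst (b : ℕ × ℕ) (f : P2 → ℝ) : D2 (b.1 + 1, b.2) f = pdr (D2 b f) :=
  Function.iterate_succ_apply' _ _ _

lemma D2_succ_snd {b : ℕ × ℕ} (hb : b.1 = 0) (f : P2 → ℝ) :
    D2 (b.1, b.2 + 1) f = pdz (D2 b f) := by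
  obtain ⟨_, n⟩ := b
  subst hb
  exact Function.iterate_succ_apply' _ _ _

section Smooth

variable {V : Set P2} {f : P2 → ℝ}

lemma ContDiffOn.pdr (hVo : IsOpen V) (hf : ContDiffOn ℝ (⊤ : ℕ∞) f V) :
    ContDiffOn ℝ (⊤ : ℕ∞) (pdr f) V :=
  (hf.fderiv_of_isOpen hVo le_rfl).clm_apply contDiffOn_const

lemma ContDiffOn.pdz (hVo : IsOpen V) (hf : ContDiffOn ℝ (⊤ : ℕ∞) f V) :
    ContDiffOn ℝ (⊤ : ℕ∞) (pdz f) V :=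
  (hf.fderiv_of_isOpen hVo le_rfl).clm_apply contDiffOn_const

lemma ContDiffOn.D2 (hVo : IsOpen V) (hf : ContDiffOn ℝ (⊤ : ℕ∞) f V) (α : ℕ × ℕ) :
    ContDiffOn ℝ (⊤ : ℕ∞) (D2 α f) V := by
  obtain ⟨k, n⟩ := α
  induction k with
  | zero =>
    induction n with
    | zero => exact hf
    | succ n ih => exact D2_succ_snd (b := (0, n)) rfl f ▸ ih.pdz hVo
  | succ k ih => exact (D2_succ_fst (k, n) f) ▸ ih.pdr hVo

lemma ContDiffOn.rho2_rpow_mul (hV0 : (0 : P2) ∉ V) (hf : ContDiffOn ℝ (⊤ : ℕ∞) f V) (s : ℝ) :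
    ContDiffOn ℝ (⊤ : ℕ∞) (fun q => rho2 q ^ s * f q) V := by
  have hsq : ContDiffOn ℝ (⊤ : ℕ∞) (fun q : P2 => (q.1 ^ 2 + q.2 ^ 2) ^ (s / 2)) V :=
    ((contDiff_fst.pow 2).add (contDiff_snd.pow 2)).contDiffOn.rpow_const_of_ne
      fun q hq => (fst_sq_add_snd_sq_pos (ne_of_mem_of_not_mem hq hV0)).ne'
  simp only [rho2_rpow]
  exact hsq.mul hf

end Smooth

/-- The expression `c ρ^t r^i z^j ∂^β v`. -/
structure RhoTerm where
  c : ℝ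
  t : ℝ
  i : ℕ
  j : ℕ
  β : ℕ × ℕ

namespace RhoTerm

def eval (T : RhoTerm) (v : P2 → ℝ) (p : P2) : ℝ :=
  T.c * rho2 p ^ T.t * p.1 ^ T.i * p.2 ^ T.j * D2 T.β v p

/- Product rule with `∂_r ρ^t = t ρ^(t-2) r`; when `i = 0` the truncated `i - 1` is harmless
because the coefficient `c * i` vanishes. -/
def derivR (T : RhoTerm) : List RhoTerm :=
  [⟨T.c * T.t, T.t - 2, T.i + 1, T.j, T.β⟩, ⟨T.c * T.i, T.t, T.i - 1, T.j, T.β⟩,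
    ⟨T.c, T.t, T.i, T.j, (T.β.1 + 1, T.β.2)⟩]

def derivZ (T : RhoTerm) : List RhoTerm :=
  [⟨T.c * T.t, T.t - 2, T.i, T.j + 1, T.β⟩, ⟨T.c * T.j, T.t, T.i, T.j - 1, T.β⟩,
    ⟨T.c, T.t, T.i, T.j, (T.β.1, T.β.2 + 1)⟩]

end RhoTerm

def sumEval (L : List RhoTerm) (v : P2 → ℝ) (p : P2) : ℝ := (L.map fun T => T.eval v p).sum

lemma sumEval_cons (T : RhoTerm) (L : List RhoTerm) (v : P2 → ℝ) :
    sumEval (T :: L) v = fun p => T.eval v p + sumEval L v p := by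
  ext p; simp [sumEval]

lemma sumEval_append (L₁ L₂ : List RhoTerm) (v : P2 → ℝ) (p : P2) :
    sumEval (L₁ ++ L₂) v p = sumEval L₁ v p + sumEval L₂ v p := by
  simp [sumEval]

/-- `T` scales like `ρ^d` when `∂^β` is given degree `-|β|`, and has order at most `k`. -/
def RhoTerm.IsHomogeneous (d : ℝ) (k : ℕ) (T : RhoTerm) : Prop :=
  T.c ≠ 0 → T.t + T.i + T.j = d + wt2 T.β ∧ wt2 T.β ≤ k

lemma RhoTerm.IsHomogeneous.derivR {d : ℝ} {k : ℕ} {T T' : RhoTerm} (hT : T.IsHomogeneous d k)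
    (hT' : T' ∈ T.derivR) : T'.IsHomogeneous (d - 1) (k + 1) := by
  simp only [RhoTerm.derivR, List.mem_cons, List.not_mem_nil, or_false] at hT'
  rcases hT' with rfl | rfl | rfl <;> intro hc <;> dsimp only at hc ⊢ <;>
    simp only [ne_eq, mul_eq_zero, not_or] at hc
  · obtain ⟨he, hk⟩ := hT hc.1
    refine ⟨?_, by omega⟩
    push_cast at he ⊢
    linarith
  · obtain ⟨he, hk⟩ := hT hc.1
    have hi : T.i ≠ 0 := by exact_mod_cast hc.2
    refine ⟨?_, by omega⟩
    push_cast [Nat.one_le_iff_ne_zero.2 hi] at he ⊢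
    linarith
  · obtain ⟨he, hk⟩ := hT hc
    refine ⟨?_, by simp only [wt2] at hk ⊢; omega⟩
    simp only [wt2] at he ⊢
    push_cast at he ⊢
    linarith

lemma RhoTerm.IsHomogeneous.derivZ {d : ℝ} {k : ℕ} {T T' : RhoTerm} (hT : T.IsHomogeneous d k)
    (hT' : T' ∈ T.derivZ) : T'.IsHomogeneous (d - 1) (k + 1) := by
  simp only [RhoTerm.derivZ, List.mem_cons, List.not_mem_nil, or_false] at hT'
  rcases hT' with rfl | rfl | rfl <;> intro hc <;> dsimp only at hc ⊢ <;>
    simp only [ne_eq, mul_eq_zero, not_or] at hc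
  · obtain ⟨he, hk⟩ := hT hc.1
    refine ⟨?_, by omega⟩
    push_cast at he ⊢
    linarith
  · obtain ⟨he, hk⟩ := hT hc.1
    have hj : T.j ≠ 0 := by exact_mod_cast hc.2
    refine ⟨?_, by omega⟩
    push_cast [Nat.one_le_iff_ne_zero.2 hj] at he ⊢
    linarith
  · obtain ⟨he, hk⟩ := hT hc
    refine ⟨?_, by simp only [wt2] at hk ⊢; omega⟩
    simp only [wt2] at he ⊢
    push_cast at he ⊢
    linarith

lemma RhoTerm.hasFDerivAt_eval (T : RhoTerm) {v : P2 → ℝ} {p : P2} (hp : p ≠ 0)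
    (hv : DifferentiableAt ℝ (D2 T.β v) p) :
    ∃ Φ : P2 →L[ℝ] ℝ, HasFDerivAt (T.eval v) Φ p ∧
      Φ (1, 0) = sumEval T.derivR v p ∧ (T.β.1 = 0 → Φ (0, 1) = sumEval T.derivZ v p) := by
  have hr := (hasDerivAt_pow T.i p.1).comp_hasFDerivAt p (hasFDerivAt_fst (p := p) (𝕜 := ℝ))
  have hz := (hasDerivAt_pow T.j p.2).comp_hasFDerivAt p (hasFDerivAt_snd (p := p) (𝕜 := ℝ))
  refine ⟨_, ((((hasFDerivAt_rho2_rpow hp T.t).const_mul T.c).mul hr).mul hz).mul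
    hv.hasFDerivAt, ?_, fun hβ => ?_⟩
  · have hD : fderiv ℝ (D2 T.β v) p (1, 0) = D2 (T.β.1 + 1, T.β.2) v p := by
      rw [D2_succ_fst]; rfl
    simp only [RhoTerm.derivR, sumEval, RhoTerm.eval, List.map, List.sum_cons, List.sum_nil,
      add_apply, smul_apply, smul_eq_mul, ContinuousLinearMap.coe_fst',
      ContinuousLinearMap.coe_snd', hD, Pi.mul_apply, Function.comp_apply]
    ring
  · have hD : fderiv ℝ (D2 T.β v) p (0, 1) = D2 (T.β.1, T.β.2 + 1) v p := by
      rw [D2_succ_snd hβ]; rfl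
    simp only [RhoTerm.derivZ, sumEval, RhoTerm.eval, List.map, List.sum_cons, List.sum_nil,
      add_apply, smul_apply, smul_eq_mul, ContinuousLinearMap.coe_fst',
      ContinuousLinearMap.coe_snd', hD, Pi.mul_apply, Function.comp_apply]
    ring

lemma hasFDerivAt_sumEval (L : List RhoTerm) {v : P2 → ℝ} {p : P2} (hp : p ≠ 0)
    (hv : ∀ β, DifferentiableAt ℝ (D2 β v) p) :
    ∃ Φ : P2 →L[ℝ] ℝ, HasFDerivAt (sumEval L v) Φ p ∧
      Φ (1, 0) = sumEval (L.flatMap RhoTerm.derivR) v p ∧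
      ((∀ T ∈ L, T.β.1 = 0) → Φ (0, 1) = sumEval (L.flatMap RhoTerm.derivZ) v p) := by
  induction L with
  | nil => exact ⟨0, hasFDerivAt_const 0 p, by simp [sumEval], fun _ => by simp [sumEval]⟩
  | cons T L ih =>
    obtain ⟨Φ, hΦ, hΦr, hΦz⟩ := ih
    obtain ⟨Ψ, hΨ, hΨr, hΨz⟩ := T.hasFDerivAt_eval hp (hv T.β)
    refine ⟨Ψ + Φ, sumEval_cons T L v ▸ hΨ.add hΦ, ?_, fun hL => ?_⟩
    · simp only [add_apply, hΨr, hΦr, List.flatMap_cons, sumEval_append]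
    · simp only [add_apply, List.flatMap_cons, sumEval_append,
        hΨz (hL T List.mem_cons_self), hΦz fun S hS => hL S (List.mem_cons_of_mem T hS)]

section Representation

variable {V : Set P2} {v f : P2 → ℝ} {L : List RhoTerm}

lemma Set.EqOn.pdr_sumEval (hVo : IsOpen V) (hV0 : (0 : P2) ∉ V)
    (hv : ContDiffOn ℝ (⊤ : ℕ∞) v V) (hf : Set.EqOn f (sumEval L v) V) :
    Set.EqOn (pdr f) (sumEval (L.flatMap RhoTerm.derivR) v) V := by
  intro p hp
  obtain ⟨Φ, hΦ, hΦr, -⟩ := hasFDerivAt_sumEval L (ne_of_mem_of_not_mem hp hV0) fun β =>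
    ((hv.D2 hVo β).contDiffAt (hVo.mem_nhds hp)).differentiableAt (by simp)
  rw [pdr, (hf.eventuallyEq_of_mem (hVo.mem_nhds hp)).fderiv_eq, hΦ.fderiv, hΦr]

lemma Set.EqOn.pdz_sumEval (hVo : IsOpen V) (hV0 : (0 : P2) ∉ V)
    (hv : ContDiffOn ℝ (⊤ : ℕ∞) v V) (hf : Set.EqOn f (sumEval L v) V)
    (hL : ∀ T ∈ L, T.β.1 = 0) :
    Set.EqOn (pdz f) (sumEval (L.flatMap RhoTerm.derivZ) v) V := by
  intro p hp
  obtain ⟨Φ, hΦ, -, hΦz⟩ := hasFDerivAt_sumEval L (ne_of_mem_of_not_mem hp hV0) fun β =>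
    ((hv.D2 hVo β).contDiffAt (hVo.mem_nhds hp)).differentiableAt (by simp)
  rw [pdz, (hf.eventuallyEq_of_mem (hVo.mem_nhds hp)).fderiv_eq, hΦ.fderiv, hΦz hL]

end Representation

def rhoPowMulTerms (s : ℝ) (α : ℕ × ℕ) : List RhoTerm :=
  (fun L => L.flatMap RhoTerm.derivR)^[α.1]
    ((fun L => L.flatMap RhoTerm.derivZ)^[α.2] [⟨1, s, 0, 0, (0, 0)⟩])

lemma rhoPowMulTerms_succ_fst (s : ℝ) (α : ℕ × ℕ) :
    rhoPowMulTerms s (α.1 + 1, α.2) = (rhoPowMulTerms s α).flatMap RhoTerm.derivR :=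
  Function.iterate_succ_apply' _ _ _

lemma rhoPowMulTerms_zero_succ_snd (s : ℝ) (n : ℕ) :
    rhoPowMulTerms s (0, n + 1) = (rhoPowMulTerms s (0, n)).flatMap RhoTerm.derivZ :=
  Function.iterate_succ_apply' _ _ _

lemma fst_β_eq_zero_of_mem_rhoPowMulTerms {s : ℝ} {n : ℕ} {T : RhoTerm}
    (hT : T ∈ rhoPowMulTerms s (0, n)) : T.β.1 = 0 := by
  induction n generalizing T with
  | zero => simp_all [rhoPowMulTerms]
  | succ n ih =>
    rw [rhoPowMulTerms_zero_succ_snd, List.mem_flatMap] at hT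
    obtain ⟨S, hS, hTS⟩ := hT
    simp only [RhoTerm.derivZ, List.mem_cons, List.not_mem_nil, or_false] at hTS
    rcases hTS with rfl | rfl | rfl <;> simpa using ih hS

lemma eqOn_D2_rho2_rpow_mul {V : Set P2} {v : P2 → ℝ} (hVo : IsOpen V) (hV0 : (0 : P2) ∉ V)
    (hv : ContDiffOn ℝ (⊤ : ℕ∞) v V) (s : ℝ) (α : ℕ × ℕ) :
    Set.EqOn (D2 α fun q => rho2 q ^ s * v q) (sumEval (rhoPowMulTerms s α) v) V := by
  obtain ⟨k, n⟩ := α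
  induction k with
  | zero =>
    induction n with
    | zero => intro p _; simp [sumEval, rhoPowMulTerms, RhoTerm.eval, D2]
    | succ n ih =>
      rw [D2_succ_snd (b := (0, n)) rfl, rhoPowMulTerms_zero_succ_snd]
      exact ih.pdz_sumEval hVo hV0 hv fun _ => fst_β_eq_zero_of_mem_rhoPowMulTerms
  | succ k ih =>
    rw [D2_succ_fst (k, n), rhoPowMulTerms_succ_fst s (k, n)]
    exact ih.pdr_sumEval hVo hV0 hv

lemma isHomogeneous_of_mem_rhoPowMulTerms {s : ℝ} {α : ℕ × ℕ} {T : RhoTerm}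
    (hT : T ∈ rhoPowMulTerms s α) : T.IsHomogeneous (s - wt2 α) (wt2 α) := by
  obtain ⟨k, n⟩ := α
  induction k generalizing T with
  | zero =>
    induction n generalizing T with
    | zero =>
      simp only [rhoPowMulTerms, Function.iterate_zero, id, List.mem_singleton] at hT
      subst hT
      intro _
      simp [wt2]
    | succ n ih =>
      rw [rhoPowMulTerms_zero_succ_snd, List.mem_flatMap] at hT
      obtain ⟨S, hS, hTS⟩ := hT
      convert (ih hS).derivZ hTS using 1 <;> push_cast [wt2] <;> ring
  | succ k ih =>
    rw [rhoPowMulTerms_succ_fst s (k, n), List.mem_flatMap] at hT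
    obtain ⟨S, hS, hTS⟩ := hT
    convert (ih hS).derivR hTS using 1 <;> push_cast [wt2] <;> ring

lemma RhoTerm.abs_eval_le (T : RhoTerm) (v : P2 → ℝ) {p : P2} (hp : p ≠ 0) :
    |T.eval v p| ≤ |T.c| * rho2 p ^ (T.t + T.i + T.j) * |D2 T.β v p| := by
  have hρ := rho2_pos hp
  have hr : |p.1| ^ T.i ≤ rho2 p ^ T.i := pow_le_pow_left₀ (abs_nonneg _) (abs_fst_le_rho2 p) _
  have hz : |p.2| ^ T.j ≤ rho2 p ^ T.j := pow_le_pow_left₀ (abs_nonneg _) (abs_snd_le_rho2 p) _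
  rw [Real.rpow_add hρ, Real.rpow_add hρ, Real.rpow_natCast, Real.rpow_natCast, RhoTerm.eval,
    abs_mul, abs_mul, abs_mul, abs_mul, abs_pow, abs_pow, abs_of_pos (Real.rpow_pos_of_pos hρ _)]
  calc |T.c| * rho2 p ^ T.t * |p.1| ^ T.i * |p.2| ^ T.j * |D2 T.β v p|
      = |T.c| * rho2 p ^ T.t * |D2 T.β v p| * (|p.1| ^ T.i * |p.2| ^ T.j) := by ring
    _ ≤ |T.c| * rho2 p ^ T.t * |D2 T.β v p| * (rho2 p ^ T.i * rho2 p ^ T.j) := by gcongr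
    _ = |T.c| * (rho2 p ^ T.t * rho2 p ^ T.i * rho2 p ^ T.j) * |D2 T.β v p| := by ring

def weightedDerivSum (m : ℕ) (a : ℝ) (v : P2 → ℝ) (p : P2) : ℝ :=
  ∑ β ∈ idx2 m, rho2 p ^ ((wt2 β : ℝ) - a) * |D2 β v p|

lemma RhoTerm.IsHomogeneous.abs_eval_le {T : RhoTerm} {a M : ℝ} {k l m : ℕ}
    (hT : T.IsHomogeneous (l - a - k) k) (hkl : k ≤ l) (hlm : l ≤ m) (v : P2 → ℝ) {p : P2}
    (hp : p ≠ 0) (hpM : rho2 p ≤ M) :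
    |T.eval v p| ≤ |T.c| * M ^ (l - k) * weightedDerivSum m a v p := by
  by_cases hc : T.c = 0
  · simp [RhoTerm.eval, hc]
  obtain ⟨hdeg, hβ⟩ := hT hc
  have hρ := rho2_pos hp
  have hsplit : rho2 p ^ (T.t + T.i + T.j) = rho2 p ^ (l - k) * rho2 p ^ ((wt2 T.β : ℝ) - a) := by
    rw [hdeg, ← Real.rpow_natCast, ← Real.rpow_add hρ, Nat.cast_sub hkl]
    ring_nf
  calc |T.eval v p| ≤ |T.c| * rho2 p ^ (T.t + T.i + T.j) * |D2 T.β v p| := T.abs_eval_le v hp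
    _ = |T.c| * rho2 p ^ (l - k) * (rho2 p ^ ((wt2 T.β : ℝ) - a) * |D2 T.β v p|) := by
      rw [hsplit]; ring
    _ ≤ |T.c| * M ^ (l - k) * weightedDerivSum m a v p := by
      have hM : 0 ≤ M := hρ.le.trans hpM
      refine mul_le_mul (by gcongr) ?_ (by positivity) (by positivity)
      exact Finset.single_le_sum (f := fun β => rho2 p ^ ((wt2 β : ℝ) - a) * |D2 β v p|)
        (fun β _ => by positivity) (mem_idx2.2 (by omega))

def coeffSum (L : List RhoTerm) : ℝ := (L.map fun T => |T.c|).sum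

lemma abs_sumEval_le {L : List RhoTerm} {a M : ℝ} {k l m : ℕ}
    (hL : ∀ T ∈ L, T.IsHomogeneous (l - a - k) k) (hkl : k ≤ l) (hlm : l ≤ m) (v : P2 → ℝ)
    {p : P2} (hp : p ≠ 0) (hpM : rho2 p ≤ M) :
    |sumEval L v p| ≤ coeffSum L * M ^ (l - k) * weightedDerivSum m a v p :=
  calc |sumEval L v p| ≤ (L.map fun T => |T.eval v p|).sum := by
        simpa [sumEval, Function.comp_def] using
          List.le_sum_of_subadditive abs abs_zero.le abs_add_le (L.map fun T => T.eval v p)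
    _ ≤ (L.map fun T => |T.c| * (M ^ (l - k) * weightedDerivSum m a v p)).sum :=
        List.sum_le_sum fun T hT => by
          rw [← mul_assoc]; exact (hL T hT).abs_eval_le hkl hlm v hp hpM
    _ = coeffSum L * M ^ (l - k) * weightedDerivSum m a v p := by
        rw [List.sum_map_mul_right, coeffSum, mul_assoc]

lemma sq_weightedDerivSum_le (m : ℕ) (a : ℝ) (v : P2 → ℝ) (p : P2) :
    weightedDerivSum m a v p ^ 2 ≤
      (idx2 m).card * ∑ β ∈ idx2 m, rho2 p ^ (2 * ((wt2 β : ℝ) - a)) * D2 β v p ^ 2 := by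
  refine sq_sum_le_card_mul_sum_sq.trans_eq (congrArg _ (Finset.sum_congr rfl fun β _ => ?_))
  rw [mul_pow, sq_abs, mul_comm 2, Real.rpow_mul (rho2_nonneg p), Real.rpow_two]

lemma integrable_and_integral_le_of_abs_le {X : Type*} [MeasurableSpace X] {μ : Measure X}
    {f g : X → ℝ} (hf : AEStronglyMeasurable f μ) (hg : Integrable g μ)
    (hfg : ∀ᵐ x ∂μ, |f x| ≤ g x) : Integrable f μ ∧ ∫ x, f x ∂μ ≤ ∫ x, g x ∂μ := by
  have hfi : Integrable f μ := hg.mono' hf (by simpa only [Real.norm_eq_abs] using hfg)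
  exact ⟨hfi, integral_mono_ae hfi hg (hfg.mono fun x hx => (le_abs_self _).trans hx)⟩

def embeddingConst (M a : ℝ) (m l : ℕ) (α : ℕ × ℕ) : ℝ :=
  (coeffSum (rhoPowMulTerms (l - a) α) * M ^ (l - wt2 α)) ^ 2 * (idx2 m).card

lemma embeddingConst_nonneg (M a : ℝ) (m l : ℕ) (α : ℕ × ℕ) : 0 ≤ embeddingConst M a m l α := by
  unfold embeddingConst; positivity

section Embedding

variable {V : Set P2} {M a : ℝ} {l m : ℕ} {v : P2 → ℝ}

lemma sq_D2_rho2_rpow_mul_le (hVo : IsOpen V) (hV0 : (0 : P2) ∉ V)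
    (hM : ∀ p ∈ V, rho2 p ≤ M) (hlm : l ≤ m) {α : ℕ × ℕ} (hα : wt2 α ≤ l)
    (hv : ContDiffOn ℝ (⊤ : ℕ∞) v V) {p : P2} (hp : p ∈ V) :
    D2 α (fun q => rho2 q ^ ((l : ℝ) - a) * v q) p ^ 2 ≤ embeddingConst M a m l α *
      ∑ β ∈ idx2 m, rho2 p ^ (2 * ((wt2 β : ℝ) - a)) * D2 β v p ^ 2 := by
  have hL : ∀ T ∈ rhoPowMulTerms (l - a) α, T.IsHomogeneous (l - a - wt2 α) (wt2 α) :=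
    fun _ => isHomogeneous_of_mem_rhoPowMulTerms
  have habs := abs_sumEval_le hL hα hlm v (ne_of_mem_of_not_mem hp hV0) (hM p hp)
  rw [← eqOn_D2_rho2_rpow_mul hVo hV0 hv _ α hp] at habs
  calc D2 α (fun q => rho2 q ^ ((l : ℝ) - a) * v q) p ^ 2
      ≤ (coeffSum (rhoPowMulTerms (l - a) α) * M ^ (l - wt2 α) * weightedDerivSum m a v p) ^ 2 :=
        sq_le_sq' (abs_le.1 habs).1 (abs_le.1 habs).2
    _ ≤ _ := by
      rw [mul_pow, embeddingConst, mul_assoc]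
      gcongr
      exact sq_weightedDerivSum_le m a v p

lemma integrable_and_setIntegral_sq_D2_rho2_rpow_mul_le (hVo : IsOpen V) (hV0 : (0 : P2) ∉ V)
    (hVr : V ⊆ {p : P2 | 0 ≤ p.1}) (hM : ∀ p ∈ V, rho2 p ≤ M) (hlm : l ≤ m) {α : ℕ × ℕ}
    (hα : wt2 α ≤ l) (hv : ContDiffOn ℝ (⊤ : ℕ∞) v V)
    (hK : ∀ β ∈ idx2 m, Integrable
      (fun p => rho2 p ^ (2 * ((wt2 β : ℝ) - a)) * (D2 β v p) ^ 2 * p.1) (volume.restrict V)) :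
    Integrable (fun p => (D2 α (fun q => rho2 q ^ ((l : ℝ) - a) * v q) p) ^ 2 * p.1)
        (volume.restrict V) ∧
      ∫ p in V, (D2 α (fun q => rho2 q ^ ((l : ℝ) - a) * v q) p) ^ 2 * p.1 ≤
        embeddingConst M a m l α * K2 V m a v := by
  have hmeas : AEStronglyMeasurable
      (fun p => (D2 α (fun q => rho2 q ^ ((l : ℝ) - a) * v q) p) ^ 2 * p.1) (volume.restrict V) :=
    ((((hv.rho2_rpow_mul hV0 _).D2 hVo α).continuousOn.pow 2).mul
      continuous_fst.continuousOn).aestronglyMeasurable hVo.measurableSet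
  have hbound := integrable_and_integral_le_of_abs_le hmeas
    ((integrable_finsetSum _ hK).const_mul (embeddingConst M a m l α)) <| by
      filter_upwards [ae_restrict_mem hVo.measurableSet] with p hp
      have hr : 0 ≤ p.1 := hVr hp
      rw [abs_of_nonneg (by positivity), ← Finset.sum_mul, ← mul_assoc]
      exact mul_le_mul_of_nonneg_right (sq_D2_rho2_rpow_mul_le hVo hV0 hM hlm hα hv hp) hr
  refine ⟨hbound.1, hbound.2.trans_eq ?_⟩
  rw [integral_const_mul, integral_finsetSum _ hK, K2]

lemma integrable_and_H21_rho2_rpow_mul_le (hVo : IsOpen V) (hV0 : (0 : P2) ∉ V)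
    (hVr : V ⊆ {p : P2 | 0 ≤ p.1}) (hM : ∀ p ∈ V, rho2 p ≤ M) (hlm : l ≤ m)
    (hv : ContDiffOn ℝ (⊤ : ℕ∞) v V)
    (hK : ∀ β ∈ idx2 m, Integrable
      (fun p => rho2 p ^ (2 * ((wt2 β : ℝ) - a)) * (D2 β v p) ^ 2 * p.1) (volume.restrict V)) :
    (∀ α ∈ idx2 l, Integrable
        (fun p => (D2 α (fun q => rho2 q ^ ((l : ℝ) - a) * v q) p) ^ 2 * p.1)
        (volume.restrict V)) ∧
      H21 V l (fun q => rho2 q ^ ((l : ℝ) - a) * v q) ≤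
        (∑ α ∈ idx2 l, embeddingConst M a m l α) * K2 V m a v := by
  have h := fun α (hα : α ∈ idx2 l) =>
    integrable_and_setIntegral_sq_D2_rho2_rpow_mul_le hVo hV0 hVr hM hlm (mem_idx2.1 hα) hv hK
  exact ⟨fun α hα => (h α hα).1, (Finset.sum_le_sum fun α hα => (h α hα).2).trans_eq
    (Finset.sum_mul _ _ _).symm⟩

end Embedding

lemma K2_nonneg {V : Set P2} (hVo : IsOpen V) (hVr : V ⊆ {p : P2 | 0 ≤ p.1}) (m : ℕ) (a : ℝ)
    (v : P2 → ℝ) : 0 ≤ K2 V m a v :=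
  Finset.sum_nonneg fun _ _ => setIntegral_nonneg hVo.measurableSet fun p hp =>
    mul_nonneg (mul_nonneg (Real.rpow_nonneg (rho2_nonneg p) _) (sq_nonneg _)) (hVr hp)

theorem stmt_5_general (V : Set P2) (hVo : IsOpen V) (hVb : Bornology.IsBounded V)
    (hVr : V ⊆ {p : P2 | 0 ≤ p.1})
    (m : ℕ) (a : ℝ) :
    ∃ C > 0, ∀ v : P2 → ℝ, ContDiffOn ℝ (⊤ : ℕ∞) v V →
      (∀ α ∈ idx2 m,
        Integrable (fun p => rho2 p ^ (2 * ((wt2 α : ℝ) - a)) * (D2 α v p) ^ 2 * p.1)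
          (volume.restrict V)) →
      ∀ l ≤ m,
        (∀ α ∈ idx2 l,
          Integrable (fun p => (D2 α (fun q => rho2 q ^ ((l : ℝ) - a) * v q) p) ^ 2 * p.1)
            (volume.restrict V)) ∧
        H21 V l (fun q => rho2 q ^ ((l : ℝ) - a) * v q) ≤ C * K2 V m a v := by
  obtain ⟨R, hR⟩ := hVb.exists_norm_le
  have hM : ∀ p ∈ V, rho2 p ≤ 2 * R := fun p hp =>
    (rho2_le_two_mul_norm p).trans (by linarith [hR p hp])
  have hV0 : (0 : P2) ∉ V := fun h => (hVo.fst_pos hVr h).ne' rfl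
  set B := fun l => ∑ α ∈ idx2 l, embeddingConst (2 * R) a m l α
  have hB : ∀ l, 0 ≤ B l := fun l => Finset.sum_nonneg fun α _ => embeddingConst_nonneg _ _ _ _ _
  refine ⟨1 + ∑ l ∈ Finset.range (m + 1), B l,
    add_pos_of_pos_of_nonneg one_pos (Finset.sum_nonneg fun l _ => hB l),
    fun v hv hK l hlm => ?_⟩
  obtain ⟨hint, hle⟩ := integrable_and_H21_rho2_rpow_mul_le hVo hV0 hVr hM hlm hv hK
  refine ⟨hint, hle.trans (mul_le_mul_of_nonneg_right ?_ (K2_nonneg hVo hVr m a v))⟩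
  have := Finset.single_le_sum (fun l _ => hB l) (Finset.mem_range.2 (Nat.lt_succ_of_le hlm))
  linarith

/-- if ‖v‖²_{K^m_{a,1}(V)} < ∞ then for each 0 ≤ l ≤ m,
‖ρ^{-a+l} v‖²_{H^l_1(V)} ≤ C ‖v‖²_{K^m_{a,1}(V)}, C depending only on m, a, V. -/
theorem stmt_5 (V : Set P2) (hVo : IsOpen V) (hVb : Bornology.IsBounded V)
    (hVr : V ⊆ {p : P2 | 0 ≤ p.1}) (h0 : ((0, 0) : P2) ∈ closure V)
    (m : ℕ) (a : ℝ) :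
    ∃ C > 0, ∀ v : P2 → ℝ, ContDiffOn ℝ (⊤ : ℕ∞) v V →
      (∀ α ∈ idx2 m,
        Integrable (fun p => rho2 p ^ (2 * ((wt2 α : ℝ) - a)) * (D2 α v p) ^ 2 * p.1)
          (volume.restrict V)) →
      ∀ l ≤ m,
        (∀ α ∈ idx2 l,
          Integrable (fun p => (D2 α (fun q => rho2 q ^ ((l : ℝ) - a) * v q) p) ^ 2 * p.1)
            (volume.restrict V)) ∧
        H21 V l (fun q => rho2 q ^ ((l : ℝ) - a) * v q) ≤ C * K2 V m a v :=
  stmt_5_general V hVo hVb hVr m a
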